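/- arXiv:2211.15369 — 3 statements merged into one kernel-verified Lean document; each statement's English description precedes it below -/
import Mathlib

section
/- For every positive integer N, the index of the principal congruence subgroup Γ(N) in SL(2,ℤ) equals N³·∏_{p|N}(1 − p⁻²), where the product runs over the distinct prime divisors p of N. -/
open CongruenceSubgroup
open scoped MatrixGroups

namespace GammaIndexAux

open Matrix Matrix.SpecialLinearGroup Finset

variable {R : Type*} [CommRing R]

def UT (t : R) : SL(2, R) := ⟨!![1, t; 0, 1], by simp [Matrix.det_fin_two_of]⟩

@[simp] lemma UT_coe (t : R) : (UT t : Matrix (Fin 2) (Fin 2) R) = !![1, t; 0, 1] := rfl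

lemma row_eq (g h : SL(2, R)) (h0 : g 1 0 = h 1 0) (h1 : g 1 1 = h 1 1) :
    g = UT ((g * h⁻¹) 0 1) * h := by
  set s := g * h⁻¹ with hs
  have hinv : (h⁻¹ : SL(2,R)) = ⟨!![h.1 1 1, -h.1 0 1; -h.1 1 0, h.1 0 0], SL2_inv_expl_det h⟩ :=
    SL2_inv_expl h
  have hdet : h.1 0 0 * h.1 1 1 - h.1 0 1 * h.1 1 0 = 1 := by
    have := h.2; rwa [Matrix.det_fin_two] at this
  have hs10 : s 1 0 = 0 := by
    show (s : Matrix (Fin 2) (Fin 2) R) 1 0 = 0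
    rw [hs, Matrix.SpecialLinearGroup.coe_mul, hinv]
    simp [Matrix.mul_apply, Fin.sum_univ_two, h0, h1]
    ring
  have hs11 : s 1 1 = 1 := by
    show (s : Matrix (Fin 2) (Fin 2) R) 1 1 = 1
    rw [hs, Matrix.SpecialLinearGroup.coe_mul, hinv]
    simp [Matrix.mul_apply, Fin.sum_univ_two, h0, h1]
    linear_combination hdet
  have hdets : s.1 0 0 * s.1 1 1 - s.1 0 1 * s.1 1 0 = 1 := by
    have := s.2; rwa [Matrix.det_fin_two] at this
  have hs00 : s 0 0 = 1 := by
    have : s.1 1 1 = 1 := hs11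
    have h2 : s.1 1 0 = 0 := hs10
    rw [this, h2] at hdets; simpa using hdets
  have : s = UT (s 0 1) := by
    ext i j
    fin_cases i <;> fin_cases j <;>
      simp [UT, hs00, hs10, hs11]
  calc g = s * h := by rw [hs, inv_mul_cancel_right]
  _ = UT (s 0 1) * h := by rw [← this]


lemma exists_coprime_lift {N : ℕ} (hN : 0 < N) {x y : ZMod N} (h : IsCoprime x y) :
    ∃ c d : ℤ, IsCoprime c d ∧ (c : ZMod N) = x ∧ (d : ZMod N) = y := by
  haveI : NeZero N := ⟨hN.ne'⟩
  obtain ⟨u, v, huv⟩ := h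
  set c : ℤ := if x = 0 then (N : ℤ) else (x.val : ℤ) with hc
  have hcx : ((c : ℤ) : ZMod N) = x := by
    rw [hc]; split_ifs with hx
    · simp [hx]
    · simp [ZMod.natCast_val, ZMod.cast_id]
  have hc0 : c ≠ 0 := by
    rw [hc]; split_ifs with hx
    · exact_mod_cast hN.ne'
    · intro h0
      exact hx ((ZMod.val_eq_zero x).mp (by exact_mod_cast h0))
  set d0 : ℤ := (y.val : ℤ) with hd0def
  have hd0 : ((d0 : ℤ) : ZMod N) = y := by simp [hd0def, ZMod.natCast_val, ZMod.cast_id]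
  have key : ∃ k : ℤ, (u.val : ℤ) * c + (v.val : ℤ) * d0 - 1 = N * k := by
    have : (((u.val : ℤ) * c + (v.val : ℤ) * d0 - 1 : ℤ) : ZMod N) = 0 := by
      push_cast
      rw [hcx, hd0]
      simp [ZMod.natCast_val, ZMod.cast_id, huv]
    obtain ⟨k, hk⟩ := (ZMod.intCast_zmod_eq_zero_iff_dvd _ N).mp this
    exact ⟨k, by exact_mod_cast hk⟩
  obtain ⟨k, hk⟩ := key
  set t : ℤ := ∏ p ∈ c.natAbs.primeFactors, if (p : ℤ) ∣ d0 then 1 else (p : ℤ) with ht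
  refine ⟨c, d0 + N * t, ?_, hcx, by push_cast [hd0]; simp⟩
  rw [Int.isCoprime_iff_gcd_eq_one]
  by_contra hg
  set p := (Int.gcd c (d0 + N * t)).minFac with hp
  have hpp : p.Prime := Nat.minFac_prime hg
  have hpg : (p : ℤ) ∣ (Int.gcd c (d0 + N * t) : ℤ) := Int.natCast_dvd_natCast.mpr (Nat.minFac_dvd _)
  have hpc : (p : ℤ) ∣ c := hpg.trans (Int.gcd_dvd_left _ _)
  have hpd : (p : ℤ) ∣ d0 + N * t := hpg.trans (Int.gcd_dvd_right _ _)
  have hmem : p ∈ c.natAbs.primeFactors := by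
    rw [Nat.mem_primeFactors]
    exact ⟨hpp, Int.natCast_dvd_natCast.mp (by simpa [Int.natAbs_dvd] using hpc), Int.natAbs_ne_zero.mpr hc0⟩
  by_cases hpd0 : (p : ℤ) ∣ d0
  · -- then p ∤ t and p ∤ N, contradiction with p ∣ N * t
    have hpNt : (p : ℤ) ∣ N * t := by
      have := hpd.sub hpd0; simpa using this
    rcases (Int.Prime.dvd_mul' (by exact_mod_cast hpp) hpNt) with hN' | ht'
    · -- p ∣ N : contradiction with bezout
      have : (p : ℤ) ∣ 1 := by
        have h1 : (1 : ℤ) = (u.val : ℤ) * c + (v.val : ℤ) * d0 - N * k := by linarith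
        rw [h1]
        exact dvd_sub (dvd_add (Dvd.dvd.mul_left hpc _) (Dvd.dvd.mul_left hpd0 _)) (Dvd.dvd.mul_right hN' _)
      exact hpp.one_lt.ne' (by exact_mod_cast Int.eq_one_of_dvd_one (by positivity) this)
    · -- p ∣ t : impossible as all factors of t are 1 or primes not dividing d0
      rw [ht] at ht'
      obtain ⟨q, hq, hqd⟩ := (Int.prime_iff_natAbs_prime.mpr (by simpa using hpp)).exists_mem_finset_dvd ht'
      by_cases hqd0 : (q : ℤ) ∣ d0
      · simp [hqd0] at hqd
        exact hpp.one_lt.ne' (by exact_mod_cast Int.eq_one_of_dvd_one (by positivity) hqd)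
      · simp [hqd0] at hqd
        have : p = q := by
          have hqp : q.Prime := (Nat.mem_primeFactors.mp hq).1
          exact_mod_cast (Nat.prime_dvd_prime_iff_eq hpp hqp).mp (Int.natCast_dvd_natCast.mp hqd)
        exact hqd0 (this ▸ hpd0)
  · -- p ∤ d0 : then p ∣ t, so p ∣ d0 contradiction
    have hpt : (p : ℤ) ∣ t := by
      have h2 := Finset.dvd_prod_of_mem (fun q : ℕ => if (q : ℤ) ∣ d0 then 1 else (q : ℤ)) hmem
      simp only [if_neg hpd0] at h2
      rw [ht]; exact h2
    exact hpd0 (by simpa using hpd.sub ((hpt.mul_left (N : ℤ))))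


lemma SLMOD_surjective (N : ℕ) (hN : 0 < N) :
    Function.Surjective
      (Matrix.SpecialLinearGroup.map (n := Fin 2) (Int.castRingHom (ZMod N))) := by
  haveI : NeZero N := ⟨hN.ne'⟩
  intro g
  obtain ⟨c, d, hcd, hc, hd⟩ := exists_coprime_lift hN (g.isCoprime_row 1)
  obtain ⟨A, hA0, hA1⟩ := hcd.exists_SL2_row 1
  set B := Matrix.SpecialLinearGroup.map (n := Fin 2) (Int.castRingHom (ZMod N)) A with hB
  have hB0 : g 1 0 = B 1 0 := by
    show _ = ((A 1 0 : ℤ) : ZMod N)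
    rw [hA0, hc]
  have hB1 : g 1 1 = B 1 1 := by
    show _ = ((A 1 1 : ℤ) : ZMod N)
    rw [hA1, hd]
  set t := (g * B⁻¹) 0 1 with htdef
  have hmapUT : Matrix.SpecialLinearGroup.map (n := Fin 2) (Int.castRingHom (ZMod N))
      (UT ((t.val : ℤ))) = UT t := by
    ext i j
    fin_cases i <;> fin_cases j <;>
      simp [ZMod.natCast_val, ZMod.cast_id, Matrix.SpecialLinearGroup.map_apply_coe, RingHom.mapMatrix_apply]
  refine ⟨UT ((t.val : ℤ)) * A, ?_⟩
  rw [_root_.map_mul, hmapUT, ← hB, ← row_eq g B hB0 hB1]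


/-- choice of SL2 matrix with prescribed coprime bottom row -/
noncomputable def rowMat (v : {v : R × R // IsCoprime v.1 v.2}) : SL(2, R) :=
  (v.2.exists_SL2_row 1).choose

lemma rowMat_spec (v : {v : R × R // IsCoprime v.1 v.2}) :
    rowMat v 1 0 = v.1.1 ∧ rowMat v 1 1 = v.1.2 :=
  (v.2.exists_SL2_row 1).choose_spec

noncomputable def slEquiv (R : Type*) [CommRing R] :
    SL(2, R) ≃ {v : R × R // IsCoprime v.1 v.2} × R where
  toFun g := (⟨(g 1 0, g 1 1), g.isCoprime_row 1⟩,
    (g * (rowMat ⟨(g 1 0, g 1 1), g.isCoprime_row 1⟩)⁻¹) 0 1)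
  invFun p := UT p.2 * rowMat p.1
  left_inv g := by
    have hs := rowMat_spec ⟨(g 1 0, g 1 1), g.isCoprime_row 1⟩
    exact (row_eq g (rowMat ⟨(g 1 0, g 1 1), g.isCoprime_row 1⟩) hs.1.symm hs.2.symm).symm
  right_inv p := by
    obtain ⟨v, t⟩ := p
    have h0 : (UT t * rowMat v) 1 0 = v.1.1 := by
      rw [← (rowMat_spec v).1]
      show ((UT t : Matrix (Fin 2) (Fin 2) R) * (rowMat v : Matrix (Fin 2) (Fin 2) R)) 1 0 = _
      simp [UT, Matrix.mul_apply, Fin.sum_univ_two]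
    have h1 : (UT t * rowMat v) 1 1 = v.1.2 := by
      rw [← (rowMat_spec v).2]
      show ((UT t : Matrix (Fin 2) (Fin 2) R) * (rowMat v : Matrix (Fin 2) (Fin 2) R)) 1 1 = _
      simp [UT, Matrix.mul_apply, Fin.sum_univ_two]
    have hv : (⟨((UT t * rowMat v) 1 0, (UT t * rowMat v) 1 1),
        (UT t * rowMat v).isCoprime_row 1⟩ : {v : R × R // IsCoprime v.1 v.2}) = v := by
      apply Subtype.ext
      simp [h0, h1]
    ext : 1
    · exact hv
    · show (UT t * rowMat v * (rowMat (⟨((UT t * rowMat v) 1 0, (UT t * rowMat v) 1 1),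
        (UT t * rowMat v).isCoprime_row 1⟩))⁻¹) 0 1 = t
      rw [hv, mul_inv_cancel_right]
      show (UT t : Matrix (Fin 2) (Fin 2) R) 0 1 = t
      simp [UT]

lemma card_SL (R : Type*) [CommRing R] :
    Nat.card (SL(2, R)) = Nat.card {v : R × R // IsCoprime v.1 v.2} * Nat.card R := by
  rw [Nat.card_congr (slEquiv R), Nat.card_prod]


noncomputable def u (n : ℕ) : ℕ := Nat.card {v : ZMod n × ZMod n // IsCoprime v.1 v.2}

lemma isCoprime_prod_iff {A B : Type*} [CommSemiring A] [CommSemiring B] (a b : A × B) :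
    IsCoprime a b ↔ IsCoprime a.1 b.1 ∧ IsCoprime a.2 b.2 := by
  constructor
  · intro h
    exact ⟨h.map (RingHom.fst A B), h.map (RingHom.snd A B)⟩
  · rintro ⟨⟨u1, v1, h1⟩, ⟨u2, v2, h2⟩⟩
    exact ⟨(u1, u2), (v1, v2), Prod.ext (by simpa using h1) (by simpa using h2)⟩

/-- transport coprime pairs along a ring equiv -/
def coprimePairsEquiv {A B : Type*} [CommSemiring A] [CommSemiring B] (e : A ≃+* B) :
    {v : A × A // IsCoprime v.1 v.2} ≃ {v : B × B // IsCoprime v.1 v.2} where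
  toFun v := ⟨(e v.1.1, e v.1.2), v.2.map (e : A →+* B)⟩
  invFun v := ⟨(e.symm v.1.1, e.symm v.1.2), v.2.map (e.symm : B →+* A)⟩
  left_inv v := by apply Subtype.ext; simp
  right_inv v := by apply Subtype.ext; simp

def coprimePairsProdEquiv {A B : Type*} [CommSemiring A] [CommSemiring B] :
    {v : (A × B) × (A × B) // IsCoprime v.1 v.2} ≃
      {v : A × A // IsCoprime v.1 v.2} × {v : B × B // IsCoprime v.1 v.2} where
  toFun v := (⟨(v.1.1.1, v.1.2.1), ((isCoprime_prod_iff _ _).mp v.2).1⟩,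
              ⟨(v.1.1.2, v.1.2.2), ((isCoprime_prod_iff _ _).mp v.2).2⟩)
  invFun p := ⟨((p.1.1.1, p.2.1.1), (p.1.1.2, p.2.1.2)),
    (isCoprime_prod_iff _ _).mpr ⟨p.1.2, p.2.2⟩⟩
  left_inv v := rfl
  right_inv p := rfl

lemma u_one : u 1 = 1 := by
  rw [u, Nat.card_eq_one_iff_unique]
  exact ⟨⟨fun a b => Subtype.ext (Subsingleton.elim _ _)⟩,
    ⟨⟨(0, 0), ⟨0, 0, Subsingleton.elim _ _⟩⟩⟩⟩

lemma u_mul {m n : ℕ} (h : m.Coprime n) : u (m * n) = u m * u n := by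
  rcases eq_or_ne m 0 with rfl | hm
  · have hn1 : n = 1 := by simpa using h
    subst hn1
    rw [mul_one, u_one, mul_one]
  rcases eq_or_ne n 0 with rfl | hn
  · have hm1 : m = 1 := by simpa using h
    subst hm1
    rw [one_mul, u_one, one_mul]
  have e := ZMod.chineseRemainder h
  rw [u, Nat.card_congr ((coprimePairsEquiv e).trans coprimePairsProdEquiv), Nat.card_prod]
  rfl


lemma isCoprime_zmod_pp {p k : ℕ} (hp : p.Prime) (hk : 0 < k) (c d : ZMod (p ^ k)) :
    IsCoprime c d ↔ IsUnit c ∨ IsUnit d := by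
  haveI : Fact p.Prime := ⟨hp⟩
  haveI : NeZero (p ^ k) := ⟨pow_ne_zero _ hp.pos.ne'⟩
  constructor
  · rintro ⟨a, b, hab⟩
    by_contra hcon
    push_neg at hcon
    obtain ⟨hc, hd⟩ := hcon
    -- non-units are divisible by p
    have hdvd : ∀ x : ZMod (p ^ k), ¬IsUnit x → ∃ x' : ZMod (p ^ k), x = p * x' := by
      intro x hx
      have hxv : ¬(x.val.Coprime (p ^ k)) := by
        intro hco
        exact hx (by simpa [ZMod.natCast_val, ZMod.cast_id] using
          (ZMod.isUnit_iff_coprime x.val (p ^ k)).mpr hco)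
      have : p ∣ x.val := by
        by_contra hpd
        exact hxv (Nat.Coprime.pow_right _ ((Nat.Prime.coprime_iff_not_dvd hp).mpr hpd).symm)
      obtain ⟨m, hm⟩ := this
      refine ⟨(m : ZMod (p ^ k)), ?_⟩
      have : ((x.val : ℕ) : ZMod (p ^ k)) = ((p * m : ℕ) : ZMod (p ^ k)) := by rw [hm]
      rw [ZMod.natCast_val, ZMod.cast_id] at this
      rw [this]
      push_cast
      ring
    obtain ⟨c', hc'⟩ := hdvd c hc
    obtain ⟨d', hd'⟩ := hdvd d hd
    have hunit : IsUnit ((p : ZMod (p ^ k))) := by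
      refine IsUnit.of_mul_eq_one (a * c' + b * d') ?_
      calc (p : ZMod (p ^ k)) * (a * c' + b * d')
          = a * (p * c') + b * (p * d') := by ring
        _ = 1 := by rw [← hc', ← hd', hab]
    rw [ZMod.isUnit_iff_coprime] at hunit
    have : ¬ p.Coprime (p ^ k) := by
      intro hco
      have h1 : p ∣ p ^ k := dvd_pow_self p hk.ne'
      have := Nat.eq_one_of_dvd_coprimes hco dvd_rfl h1
      exact hp.one_lt.ne' this
    exact this hunit
  · rintro (h | h)
    · obtain ⟨w, hw⟩ := h.exists_left_inv
      exact ⟨w, 0, by rw [hw]; ring⟩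
    · obtain ⟨w, hw⟩ := h.exists_left_inv
      exact ⟨0, w, by rw [hw]; ring⟩


lemma u_prime_pow {p k : ℕ} (hp : p.Prime) (hk : 0 < k) :
    u (p ^ k) = p ^ (2 * k) - (p ^ (k - 1)) ^ 2 := by
  classical
  haveI : Fact p.Prime := ⟨hp⟩
  haveI : NeZero (p ^ k) := ⟨pow_ne_zero _ hp.pos.ne'⟩
  have hnu : Fintype.card {x : ZMod (p ^ k) // ¬ IsUnit x} = p ^ (k - 1) := by
    rw [Fintype.card_subtype_compl]
    have h1 : Fintype.card {x : ZMod (p ^ k) // IsUnit x} = Fintype.card (ZMod (p ^ k))ˣ := by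
      have E : (ZMod (p ^ k))ˣ ≃ {x : ZMod (p ^ k) // IsUnit x} :=
        { toFun := fun w => ⟨w.1, w.isUnit⟩
          invFun := fun x => x.2.unit
          left_inv := fun w => Units.ext rfl
          right_inv := fun x => Subtype.ext x.2.unit_spec }
      exact Fintype.card_congr E.symm
    rw [h1, ZMod.card_units_eq_totient, ZMod.card, Nat.totient_prime_pow hp hk]
    have h2 : p ^ k = p ^ (k - 1) * p := by
      rw [← pow_succ]; congr 1; omega
    rw [h2, ← Nat.mul_sub]
    have : p - (p - 1) = 1 := by have := hp.one_lt; omega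
    rw [this, mul_one]
  have hnc : Fintype.card {v : ZMod (p ^ k) × ZMod (p ^ k) // ¬ IsCoprime v.1 v.2}
      = p ^ (k - 1) * p ^ (k - 1) := by
    rw [← hnu]
    have E : {v : ZMod (p ^ k) × ZMod (p ^ k) // ¬ IsCoprime v.1 v.2} ≃
        ({x : ZMod (p ^ k) // ¬ IsUnit x} × {x : ZMod (p ^ k) // ¬ IsUnit x}) :=
      { toFun := fun v => (⟨v.1.1, fun h => v.2 ((isCoprime_zmod_pp hp hk _ _).mpr (Or.inl h))⟩,
          ⟨v.1.2, fun h => v.2 ((isCoprime_zmod_pp hp hk _ _).mpr (Or.inr h))⟩)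
        invFun := fun q => ⟨(q.1.1, q.2.1),
          fun h => ((isCoprime_zmod_pp hp hk _ _).mp h).elim q.1.2 q.2.2⟩
        left_inv := fun v => rfl
        right_inv := fun q => rfl }
    rw [Fintype.card_congr E, Fintype.card_prod]
  have htot : Fintype.card (ZMod (p ^ k) × ZMod (p ^ k)) = p ^ (2 * k) := by
    rw [Fintype.card_prod, ZMod.card, ← pow_add]; congr 1; omega
  have hcompl := Fintype.card_subtype_compl
    (p := fun v : ZMod (p ^ k) × ZMod (p ^ k) => IsCoprime v.1 v.2)
  have hle := Fintype.card_subtype_le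
    (p := fun v : ZMod (p ^ k) × ZMod (p ^ k) => IsCoprime v.1 v.2)
  rw [u, Nat.card_eq_fintype_card]
  rw [hnc, htot] at hcompl
  rw [htot] at hle
  have : (p ^ (k-1)) ^ 2 = p ^ (k-1) * p ^ (k-1) := by ring
  omega


lemma card_SL' (R : Type*) [CommRing R] :
    Nat.card (SL(2, R)) = Nat.card {v : R × R // IsCoprime v.1 v.2} * Nat.card R :=
  card_SL R

end GammaIndexAux

open GammaIndexAux in
/-- **Index of the principal congruence subgroup.**
For every positive integer `N`, the index of `Γ(N)` in `SL(2, ℤ)` equals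
`N³ · ∏_{p ∣ N} (1 − p⁻²)`, the product running over the distinct prime divisors of `N`. -/
theorem Gamma_index (N : ℕ) (hN : 0 < N) :
    ((Gamma N).index : ℚ) = N ^ 3 * ∏ p ∈ N.primeFactors, (1 - ((p : ℚ)⁻¹) ^ 2) := by
  classical
  -- Step 1: index = card of SL(2, ZMod N)
  have hidx : (Gamma N).index = Nat.card (SL(2, ZMod N)) := by
    rw [Gamma, Subgroup.index_ker,
      MonoidHom.range_eq_top.mpr (SLMOD_surjective N hN), Subgroup.card_top]
  -- Step 2: express via u
  have hcard : (Gamma N).index = u N * N := by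
    rw [hidx, card_SL (ZMod N), Nat.card_zmod]; rfl
  -- Step 3: multiplicative function
  set F : ℕ → ℚ := fun n => (u n : ℚ) * n with hF
  have hmult : ∀ x y : ℕ, x.Coprime y → F (x * y) = F x * F y := by
    intro x y h
    simp only [hF, u_mul h]
    push_cast
    ring
  have hF1 : F 1 = 1 := by simp [hF, u_one]
  have hfac := Nat.multiplicative_factorization F hmult hF1 hN.ne'
  have hIF : ((Gamma N).index : ℚ) = F N := by
    rw [hcard, hF]; push_cast; ring
  rw [hIF, hfac, Finsupp.prod]
  have hterm : ∀ p ∈ N.factorization.support,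
      F (p ^ N.factorization p) = ((p : ℚ) ^ N.factorization p) ^ 3 * (1 - ((p : ℚ)⁻¹) ^ 2) := by
    intro p hp
    have hpp : p.Prime := Nat.prime_of_mem_primeFactors (Nat.support_factorization N ▸ hp)
    have hk : 0 < N.factorization p := Nat.Prime.factorization_pos_of_dvd hpp hN.ne'
      (Nat.dvd_of_mem_primeFactors (Nat.support_factorization N ▸ hp))
    obtain ⟨j, hj⟩ : ∃ j, N.factorization p = j + 1 :=
      ⟨N.factorization p - 1, by omega⟩
    rw [hj]
    have hp0 : (p : ℚ) ≠ 0 := Nat.cast_ne_zero.mpr hpp.pos.ne'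
    rw [hF]
    simp only
    have hle : (p ^ j) ^ 2 ≤ p ^ (2 * (j + 1)) := by
      rw [← pow_mul]
      exact Nat.pow_le_pow_right hpp.pos (by omega)
    have h1 : j + 1 - 1 = j := by omega
    rw [u_prime_pow hpp (by omega), h1] at *
    push_cast [Nat.cast_sub hle]
    field_simp
    ring
  rw [Finset.prod_congr rfl hterm, Finset.prod_mul_distrib, Finset.prod_pow]
  have hNprod : ∏ p ∈ N.factorization.support, (p : ℚ) ^ N.factorization p = (N : ℚ) := by
    have := Nat.factorization_prod_pow_eq_self hN.ne'
    calc ∏ p ∈ N.factorization.support, (p : ℚ) ^ N.factorization p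
        = ((N.factorization.prod fun p k => p ^ k : ℕ) : ℚ) := by
          rw [Finsupp.prod]; push_cast; rfl
      _ = (N : ℚ) := by rw [this]
  rw [hNprod, Nat.support_factorization]
end

section
/- For every positive integer N, the index of the Hecke subgroup Γ₀(N) in SL(2,ℤ) equals N·∏_{p|N}(1 + p⁻¹), where the product runs over the distinct prime divisors p of N. -/
open CongruenceSubgroup
open scoped MatrixGroups


/-- From coprimality mod `N`, get an integer Bezout-type identity. -/
lemma zmod_isCoprime_exists {N : ℕ} [NeZero N] {x y : ℤ}
    (h : IsCoprime (x : ZMod N) (y : ZMod N)) :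
    ∃ a b c : ℤ, a * x + b * y + c * N = 1 := by
  obtain ⟨A, B, hAB⟩ := h
  obtain ⟨a, ha⟩ := ZMod.intCast_surjective (n := N) A
  obtain ⟨b, hb⟩ := ZMod.intCast_surjective (n := N) B
  have : ((a * x + b * y - 1 : ℤ) : ZMod N) = 0 := by
    push_cast
    rw [ha, hb, hAB]
    ring
  rw [ZMod.intCast_zmod_eq_zero_iff_dvd] at this
  obtain ⟨c, hc⟩ := this
  exact ⟨a, b, -c, by linarith⟩

/-- Lift a unimodular pair mod `N` to a coprime pair of integers. -/
lemma exists_coprime_lift (N : ℕ) [NeZero N] (x y : ℤ)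
    (h : IsCoprime (x : ZMod N) (y : ZMod N)) :
    ∃ c d : ℤ, IsCoprime c d ∧ (c : ZMod N) = (x : ZMod N) ∧ (d : ZMod N) = (y : ZMod N) := by
  obtain ⟨a, b, c, habc⟩ := zmod_isCoprime_exists h
  set X : ℤ := if x = 0 then (N : ℤ) else x with hX
  have hX0 : X ≠ 0 := by
    rcases eq_or_ne x 0 with h0 | h0
    · simp [hX, h0, Nat.cast_ne_zero.mpr (NeZero.ne N), NeZero.ne N]
    · simp [hX, h0]
  have hXx : (X : ZMod N) = (x : ZMod N) := by
    rcases eq_or_ne x 0 with h0 | h0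
    · simp [hX, h0]
    · simp [hX, h0]
  -- the key Bezout identity still holds with X in place of x
  have habc' : ∃ a' c' : ℤ, a' * X + b * y + c' * N = 1 := by
    rcases eq_or_ne x 0 with h0 | h0
    · exact ⟨0, a * x / N + c, by simp [hX, h0]; rw [h0] at habc; push_cast; linarith [habc]⟩
    · exact ⟨a, c, by simp [hX, h0]; linarith [habc]⟩
  obtain ⟨a', c', hBez⟩ := habc'
  set Kn : ℕ := ∏ p ∈ X.natAbs.primeFactors.filter (fun p : ℕ => ¬ (p : ℤ) ∣ y), p with hK
  set K : ℤ := (Kn : ℤ)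
  refine ⟨X, y + N * K, ?_, hXx, by push_cast; simp⟩
  rw [Int.isCoprime_iff_gcd_eq_one]
  by_contra hg
  obtain ⟨q, hq, hqdvd⟩ := Nat.exists_prime_and_dvd hg
  have hqX : (q : ℤ) ∣ X := dvd_trans (Int.natCast_dvd_natCast.mpr hqdvd) (Int.gcd_dvd_left _ _)
  have hqd : (q : ℤ) ∣ y + N * K := dvd_trans (Int.natCast_dvd_natCast.mpr hqdvd) (Int.gcd_dvd_right _ _)
  by_cases hqy : (q : ℤ) ∣ y
  · -- q ∣ y, so q ∣ N * K
    have hqNK : (q : ℤ) ∣ (N : ℤ) * K := (dvd_add_right hqy).mp hqd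
    rcases (Nat.prime_iff_prime_int.mp hq).dvd_mul.mp hqNK with hqN | hqK
    · -- q ∣ N: contradiction with Bezout
      have : (q : ℤ) ∣ 1 := hBez ▸ dvd_add (dvd_add (Dvd.dvd.mul_left hqX a')
        (Dvd.dvd.mul_left hqy b)) (Dvd.dvd.mul_left hqN c')
      have h1 : q ∣ 1 := by exact_mod_cast this
      exact hq.one_lt.ne' (Nat.dvd_one.mp h1)
    · -- q ∣ K: but all prime factors of K do not divide y... yet q ∣ y; contradiction
      have : q ∣ Kn := Int.natCast_dvd_natCast.mp hqK
      rw [hK] at this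
      obtain ⟨p, hp, hqp⟩ := (Nat.Prime.prime hq).exists_mem_finset_dvd this
      rw [Finset.mem_filter] at hp
      have : q = p := ((Nat.prime_dvd_prime_iff_eq hq (Nat.prime_of_mem_primeFactors hp.1)).mp hqp)
      exact hp.2 (this ▸ hqy)
  · -- q ∤ y : then q ∈ the filter set, so q ∣ K, so q ∣ N*K, so q ∣ y. contra
    have hqmem : q ∈ X.natAbs.primeFactors.filter (fun p : ℕ => ¬ (p : ℤ) ∣ y) := by
      rw [Finset.mem_filter, Nat.mem_primeFactors]
      exact ⟨⟨hq, (by simpa using Int.natAbs_dvd_natAbs.mpr hqX), Int.natAbs_ne_zero.mpr hX0⟩, hqy⟩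
    have hqK : (q : ℤ) ∣ K := Int.natCast_dvd_natCast.mpr (hK ▸ Finset.dvd_prod_of_mem _ hqmem)
    have hqNK : (q : ℤ) ∣ (N : ℤ) * K := Dvd.dvd.mul_left hqK _
    exact hqy (by simpa using dvd_sub hqd hqNK)

open Matrix Matrix.SpecialLinearGroup MulAction CongruenceSubgroup
open scoped MatrixGroups

/-- unimodular pairs over `ZMod N` -/
abbrev UniPair (N : ℕ) := {v : ZMod N × ZMod N // IsCoprime v.1 v.2}

instance UniPair.instSMul (N : ℕ) : SMul (ZMod N)ˣ (UniPair N) :=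
  ⟨fun u v => ⟨((u : ZMod N) * v.1.1, (u : ZMod N) * v.1.2),
    ((isCoprime_mul_unit_left_left u.isUnit _ _).mpr
      ((isCoprime_mul_unit_left_right u.isUnit _ _).mpr v.2))⟩⟩

@[simp] lemma UniPair.smul_def {N : ℕ} (u : (ZMod N)ˣ) (v : UniPair N) :
    (u • v).1 = ((u : ZMod N) * v.1.1, (u : ZMod N) * v.1.2) := rfl

instance UniPair.instMulAction (N : ℕ) : MulAction (ZMod N)ˣ (UniPair N) where
  one_smul v := by
    apply Subtype.ext
    simp
  mul_smul u w v := by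
    apply Subtype.ext
    simp [mul_assoc]

/-- first column of an `SL(2,ℤ)` matrix, mod `N`, as a unimodular pair -/
def colMap (N : ℕ) (g : SL(2, ℤ)) : UniPair N :=
  ⟨((g 0 0 : ZMod N), (g 1 0 : ZMod N)),
    ⟨(g 1 1 : ZMod N), -(g 0 1 : ZMod N), by
      have hdet : g 0 0 * g 1 1 - g 0 1 * g 1 0 = 1 := by
        have := g.2
        rwa [Matrix.det_fin_two] at this
      have : ((g 0 0 * g 1 1 - g 0 1 * g 1 0 : ℤ) : ZMod N) = 1 := by rw [hdet]; simp
      push_cast at this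
      linear_combination this⟩⟩

lemma colMap_rel_iff (N : ℕ) (g h : SL(2, ℤ)) :
    (∃ u : (ZMod N)ˣ, u • colMap N h = colMap N g) ↔ g⁻¹ * h ∈ Gamma0 N := by
  constructor
  · rintro ⟨u, hu⟩
    have h1 : (u : ZMod N) * (h 0 0 : ZMod N) = (g 0 0 : ZMod N) := by
      have := congrArg (fun v : UniPair N => v.1.1) hu
      simpa [colMap] using this
    have h2 : (u : ZMod N) * (h 1 0 : ZMod N) = (g 1 0 : ZMod N) := by
      have := congrArg (fun v : UniPair N => v.1.2) hu
      simpa [colMap] using this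
    rw [Gamma0_mem]
    have hinv : (g⁻¹ * h) 1 0 = -(g 1 0) * h 0 0 + g 0 0 * h 1 0 := by
      rw [Matrix.SpecialLinearGroup.coe_mul, Matrix.SpecialLinearGroup.coe_inv, Matrix.adjugate_fin_two]
      simp [Matrix.mul_apply, Fin.sum_univ_two]
      try ring
    rw [hinv]
    push_cast
    rw [← h1, ← h2]
    ring
  · intro hmem
    set γ : SL(2, ℤ) := g⁻¹ * h with hγ
    have hcol : h = g * γ := by rw [hγ]; group
    have hdetγ : γ 0 0 * γ 1 1 - γ 0 1 * γ 1 0 = 1 := by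
      have := γ.2
      rwa [Matrix.det_fin_two] at this
    have hc : (γ 1 0 : ZMod N) = 0 := Gamma0_mem.mp hmem
    have hunit : ((γ 0 0 : ℤ) : ZMod N) * ((γ 1 1 : ℤ) : ZMod N) = 1 := by
      have : ((γ 0 0 * γ 1 1 - γ 0 1 * γ 1 0 : ℤ) : ZMod N) = 1 := by rw [hdetγ]; simp
      push_cast at this
      rw [hc] at this
      linear_combination this
    refine ⟨⟨((γ 1 1 : ℤ) : ZMod N), ((γ 0 0 : ℤ) : ZMod N), by rw [mul_comm] at hunit; exact hunit, hunit⟩, ?_⟩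
    apply Subtype.ext
    have e1 : h 0 0 = g 0 0 * γ 0 0 + g 0 1 * γ 1 0 := by
      rw [hcol]; simp [Matrix.mul_apply, Fin.sum_univ_two]
    have e2 : h 1 0 = g 1 0 * γ 0 0 + g 1 1 * γ 1 0 := by
      rw [hcol]; simp [Matrix.mul_apply, Fin.sum_univ_two]
    simp only [UniPair.smul_def, colMap]
    rw [e1, e2]
    push_cast
    rw [hc]
    rw [Prod.mk.injEq]
    refine ⟨?_, ?_⟩
    · push_cast
      linear_combination ((g 0 0 : ℤ) : ZMod N) * hunit
    · push_cast
      linear_combination ((g 1 0 : ℤ) : ZMod N) * hunit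

lemma colMap_surjective_rep (N : ℕ) [NeZero N] (v : UniPair N) :
    ∃ g : SL(2, ℤ), colMap N g = v := by
  obtain ⟨x', hx'⟩ := ZMod.intCast_surjective (n := N) v.1.1
  obtain ⟨y', hy'⟩ := ZMod.intCast_surjective (n := N) v.1.2
  have hco : IsCoprime ((x' : ZMod N)) ((y' : ZMod N)) := by
    rw [hx', hy']; exact v.2
  obtain ⟨c, d, hcd, hcx, hdy⟩ := exists_coprime_lift N x' y' hco
  obtain ⟨a, b, hab⟩ := hcd
  refine ⟨⟨!![c, -b; d, a], by simp [Matrix.det_fin_two]; linarith⟩, ?_⟩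
  apply Subtype.ext
  simp only [colMap]
  show (((c : ℤ) : ZMod N), ((d : ℤ) : ZMod N)) = v.1
  rw [hcx, hdy, hx', hy']

noncomputable def gamma0CosetEquiv (N : ℕ) [NeZero N] :
    (SL(2, ℤ) ⧸ Gamma0 N) ≃ orbitRel.Quotient (ZMod N)ˣ (UniPair N) := by
  refine Equiv.ofBijective
    (Quotient.map' (colMap N) ?_) ⟨?_, ?_⟩
  · intro g h hr
    rw [QuotientGroup.leftRel_apply] at hr
    show colMap N g ∈ orbit (ZMod N)ˣ (colMap N h)
    rw [mem_orbit_iff]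
    exact (colMap_rel_iff N g h).mpr hr
  · intro q q'
    induction q using Quotient.inductionOn' with | h g =>
    induction q' using Quotient.inductionOn' with | h h =>
    intro he
    have := Quotient.exact' he
    have hmem : colMap N g ∈ orbit (ZMod N)ˣ (colMap N h) := this
    rw [mem_orbit_iff] at hmem
    exact Quotient.sound' (QuotientGroup.leftRel_apply.mpr ((colMap_rel_iff N g h).mp hmem))
  · intro q
    induction q using Quotient.inductionOn' with | h v =>
    obtain ⟨g, hg⟩ := colMap_surjective_rep N v
    exact ⟨Quotient.mk'' g, by simp [Quotient.map'_mk'', hg]⟩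

lemma stabilizer_uniPair_eq_bot (N : ℕ) (v : UniPair N) :
    stabilizer (ZMod N)ˣ v = ⊥ := by
  rw [eq_bot_iff]
  intro u hu
  have h := Subtype.ext_iff.mp (mem_stabilizer_iff.mp hu)
  rw [UniPair.smul_def, Prod.mk.injEq] at h
  obtain ⟨a, b, hab⟩ := v.2
  have : (u : ZMod N) = 1 := by
    calc (u : ZMod N) = (u : ZMod N) * (a * v.1.1 + b * v.1.2) := by rw [hab, mul_one]
    _ = a * ((u : ZMod N) * v.1.1) + b * ((u:ZMod N) * v.1.2) := by ring
    _ = a * v.1.1 + b * v.1.2 := by rw [h.1, h.2]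
    _ = 1 := hab
  exact Subgroup.mem_bot.mpr (Units.ext this)

lemma card_uniPair_eq (N : ℕ) [NeZero N] :
    Nat.card (UniPair N) =
      Nat.card (orbitRel.Quotient (ZMod N)ˣ (UniPair N)) * Nat.totient N := by
  have e : UniPair N ≃ (orbitRel.Quotient (ZMod N)ˣ (UniPair N)) × (ZMod N)ˣ := by
    refine (selfEquivSigmaOrbits (ZMod N)ˣ (UniPair N)).trans ?_
    refine (Equiv.sigmaCongrRight (fun ω => ?_)).trans (Equiv.sigmaEquivProd _ _)
    refine (orbitEquivQuotientStabilizer (ZMod N)ˣ (Quotient.out ω)).trans ?_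
    rw [stabilizer_uniPair_eq_bot]
    exact QuotientGroup.quotientBot.toEquiv
  rw [Nat.card_congr e, Nat.card_prod]
  congr 1
  rw [← ZMod.card_units_eq_totient N]
  exact Nat.card_eq_fintype_card

lemma gamma0_index_mul_totient (N : ℕ) [NeZero N] :
    (Gamma0 N).index * Nat.totient N = Nat.card (UniPair N) := by
  rw [card_uniPair_eq N]
  congr 1
  exact Nat.card_congr (gamma0CosetEquiv N)



lemma isCoprime_ringEquiv {R S : Type*} [CommSemiring R] [CommSemiring S] (e : R ≃+* S)
    {x y : R} : IsCoprime (e x) (e y) ↔ IsCoprime x y := by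
  constructor
  · intro h
    have := h.map (e.symm : S →+* R)
    simpa using this
  · intro h
    exact h.map (e : R →+* S)

lemma isCoprime_prod_iff {R S : Type*} [CommSemiring R] [CommSemiring S] (x y : R × S) :
    IsCoprime x y ↔ IsCoprime x.1 y.1 ∧ IsCoprime x.2 y.2 := by
  constructor
  · intro h
    exact ⟨h.map (RingHom.fst R S), h.map (RingHom.snd R S)⟩
  · rintro ⟨⟨a1, b1, h1⟩, ⟨a2, b2, h2⟩⟩
    exact ⟨(a1, a2), (b1, b2), by
      rw [Prod.ext_iff]
      exact ⟨h1, h2⟩⟩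

/-- CRT equivalence of unimodular pairs. -/
def uniPairCRT {m n : ℕ} (h : m.Coprime n) : UniPair (m * n) ≃ UniPair m × UniPair n :=
  letI e := ZMod.chineseRemainder h
  { toFun := fun v =>
      (⟨((e v.1.1).1, (e v.1.2).1), by
        have := (isCoprime_ringEquiv e).mpr v.2
        rw [isCoprime_prod_iff] at this
        exact this.1⟩,
       ⟨((e v.1.1).2, (e v.1.2).2), by
        have := (isCoprime_ringEquiv e).mpr v.2
        rw [isCoprime_prod_iff] at this
        exact this.2⟩)
    invFun := fun w =>
      ⟨(e.symm (w.1.1.1, w.2.1.1), e.symm (w.1.1.2, w.2.1.2)), by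
        rw [← isCoprime_ringEquiv e]
        simp only [RingEquiv.apply_symm_apply]
        rw [isCoprime_prod_iff]
        exact ⟨w.1.2, w.2.2⟩⟩
    left_inv := fun v => by
      apply Subtype.ext
      simp
    right_inv := fun w => by
      ext <;> simp }

lemma card_uniPair_mul {m n : ℕ} (h : m.Coprime n) :
    Nat.card (UniPair (m * n)) = Nat.card (UniPair m) * Nat.card (UniPair n) := by
  rw [Nat.card_congr (uniPairCRT h), Nat.card_prod]

lemma zmod_pp_isCoprime_iff {p k : ℕ} (hp : p.Prime) (hk : k ≠ 0) (x y : ZMod (p ^ k)) :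
    IsCoprime x y ↔ IsUnit x ∨ IsUnit y := by
  haveI : NeZero (p ^ k) := ⟨pow_ne_zero _ hp.ne_zero⟩
  constructor
  · rintro ⟨a, b, hab⟩
    by_contra hcon
    push_neg at hcon
    obtain ⟨hx, hy⟩ := hcon
    have hdvd : ∀ z : ZMod (p ^ k), ¬IsUnit z → (p : ZMod (p ^ k)) ∣ z := by
      intro z hz
      have hz' : ¬ Nat.Coprime z.val (p ^ k) := by
        intro hco
        exact hz (by rw [← ZMod.natCast_rightInverse z]
                     exact (ZMod.isUnit_iff_coprime z.val (p^k)).mpr hco)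
      have hg : Nat.gcd z.val (p ^ k) ≠ 1 := hz'
      obtain ⟨q, hq, hqg⟩ := Nat.exists_prime_and_dvd hg
      have hqp : q = p := (Nat.prime_dvd_prime_iff_eq hq hp).mp
        (hq.dvd_of_dvd_pow (hqg.trans (Nat.gcd_dvd_right _ _)))
      have hpz : p ∣ z.val := by
        subst hqp
        exact hqg.trans (Nat.gcd_dvd_left _ _)
      obtain ⟨c, hc⟩ := hpz
      refine ⟨(c : ZMod (p ^ k)), ?_⟩
      have : ((z.val : ℕ) : ZMod (p ^ k)) = ((p * c : ℕ) : ZMod (p ^ k)) := by rw [hc]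
      rw [ZMod.natCast_rightInverse z] at this
      rw [this]
      push_cast
      ring
    have h1 : (p : ZMod (p ^ k)) ∣ 1 := by
      rw [← hab]
      exact dvd_add ((hdvd x hx).mul_left a) ((hdvd y hy).mul_left b)
    have : IsUnit (p : ZMod (p ^ k)) := isUnit_of_dvd_one h1
    rw [ZMod.isUnit_iff_coprime] at this
    exact hp.one_lt.ne' (this.eq_one_of_dvd (dvd_pow_self p hk))
  · rintro (hx | hy)
    · obtain ⟨u, hu⟩ := hx
      exact ⟨(u⁻¹ : (ZMod (p^k))ˣ), 0, by rw [← hu]; simp⟩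
    · obtain ⟨u, hu⟩ := hy
      exact ⟨0, (u⁻¹ : (ZMod (p^k))ˣ), by rw [← hu]; simp⟩

lemma card_uniPair_pp {p k : ℕ} (hp : p.Prime) (hk : k ≠ 0) :
    Nat.card (UniPair (p ^ k)) = (p ^ k) ^ 2 - (p ^ (k - 1)) ^ 2 := by
  classical
  haveI : NeZero (p ^ k) := ⟨pow_ne_zero _ hp.ne_zero⟩
  have hcardU : Fintype.card {x : ZMod (p ^ k) // IsUnit x} = Nat.totient (p ^ k) := by
    rw [← ZMod.card_units_eq_totient]
    exact Fintype.card_congr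
      ⟨fun x => x.2.unit, fun u => ⟨u.1, u.isUnit⟩,
        fun x => Subtype.ext x.2.unit_spec, fun u => Units.ext rfl⟩
  have hpk : p ^ k = p ^ (k - 1) * p := by
    rw [← pow_succ, Nat.sub_add_cancel (Nat.one_le_iff_ne_zero.mpr hk)]
  have hnon : Fintype.card {x : ZMod (p ^ k) // ¬IsUnit x} = p ^ (k - 1) := by
    rw [Fintype.card_subtype_compl, hcardU, ZMod.card, Nat.totient_prime_pow hp
      (Nat.pos_of_ne_zero hk)]
    have h2 : p ^ (k - 1) * (p - 1) = p ^ (k - 1) * p - p ^ (k - 1) := by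
      rw [Nat.mul_sub, mul_one]
    rw [h2, ← hpk]
    have h3 : p ^ (k - 1) ≤ p ^ k := Nat.pow_le_pow_right hp.pos (Nat.sub_le _ _)
    omega
  have e1 : UniPair (p ^ k) ≃
      {v : ZMod (p ^ k) × ZMod (p ^ k) // ¬(¬IsUnit v.1 ∧ ¬IsUnit v.2)} := by
    refine Equiv.subtypeEquivRight fun v => ?_
    rw [zmod_pp_isCoprime_iff hp hk, not_and_or, not_not, not_not]
  rw [Nat.card_congr e1, Nat.card_eq_fintype_card, Fintype.card_subtype_compl]
  have e2 : {v : ZMod (p ^ k) × ZMod (p ^ k) // ¬IsUnit v.1 ∧ ¬IsUnit v.2} ≃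
      {x : ZMod (p ^ k) // ¬IsUnit x} × {x : ZMod (p ^ k) // ¬IsUnit x} :=
    Equiv.subtypeProdEquivProd (p := fun x : ZMod (p ^ k) => ¬IsUnit x)
      (q := fun x : ZMod (p ^ k) => ¬IsUnit x)
  rw [Fintype.card_congr e2, Fintype.card_prod, Fintype.card_prod, hnon, ZMod.card]
  ring_nf


lemma Gamma0_one_top : Gamma0 1 = ⊤ := by
  ext g
  simp only [Gamma0_mem, Subgroup.mem_top, iff_true]
  exact Subsingleton.elim _ _

lemma gamma0_index_one : (Gamma0 1).index = 1 := by
  rw [Gamma0_one_top, Subgroup.index_top]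

lemma gamma0_index_mult {m n : ℕ} (h : m.Coprime n) :
    (Gamma0 (m * n)).index = (Gamma0 m).index * (Gamma0 n).index := by
  rcases eq_or_ne m 0 with hm | hm
  · subst hm
    rw [Nat.coprime_zero_left] at h
    subst h
    simp [gamma0_index_one]
  rcases eq_or_ne n 0 with hn | hn
  · subst hn
    rw [Nat.coprime_zero_right] at h
    subst h
    simp [gamma0_index_one]
  haveI : NeZero m := ⟨hm⟩
  haveI : NeZero n := ⟨hn⟩
  haveI : NeZero (m * n) := ⟨mul_ne_zero hm hn⟩
  have key : Nat.totient (m * n) * ((Gamma0 (m * n)).index) =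
      Nat.totient (m * n) * ((Gamma0 m).index * (Gamma0 n).index) := by
    rw [mul_comm (Nat.totient (m * n)) ((Gamma0 (m * n)).index), gamma0_index_mul_totient,
      card_uniPair_mul h, ← gamma0_index_mul_totient, ← gamma0_index_mul_totient,
      Nat.totient_mul h]
    ring
  exact Nat.eq_of_mul_eq_mul_left (Nat.totient_pos.mpr (Nat.pos_of_ne_zero (mul_ne_zero hm hn))) key

lemma gamma0_index_pp {p k : ℕ} (hp : p.Prime) (hk : k ≠ 0) :
    (Gamma0 (p ^ k)).index = p ^ (k - 1) * (p + 1) := by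
  haveI : NeZero (p ^ k) := ⟨pow_ne_zero _ hp.ne_zero⟩
  have hφ : Nat.totient (p ^ k) = p ^ (k - 1) * (p - 1) :=
    Nat.totient_prime_pow hp (Nat.pos_of_ne_zero hk)
  have hφpos : 0 < Nat.totient (p ^ k) := Nat.totient_pos.mpr (pow_pos hp.pos k)
  apply Nat.eq_of_mul_eq_mul_left hφpos
  rw [mul_comm (Nat.totient (p ^ k)) ((Gamma0 (p ^ k)).index), gamma0_index_mul_totient,
    card_uniPair_pp hp hk, hφ]
  have hpk : p ^ k = p ^ (k - 1) * p := by
    rw [← pow_succ, Nat.sub_add_cancel (Nat.one_le_iff_ne_zero.mpr hk)]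
  rw [hpk]
  have h1 : 1 ≤ p := hp.one_lt.le
  have hle : (p ^ (k - 1)) ^ 2 ≤ (p ^ (k - 1) * p) ^ 2 :=
    Nat.pow_le_pow_left (Nat.le_mul_of_pos_right _ hp.pos) 2
  zify [h1, hle]
  ring

/-- **Index of the Hecke subgroup.**
For every positive integer `N`, the index of `Γ₀(N)` in `SL(2, ℤ)` equals
`N · ∏_{p ∣ N} (1 + p⁻¹)`, the product running over the distinct prime divisors of `N`. -/
theorem Gamma0_index (N : ℕ) (hN : 0 < N) :
    ((Gamma0 N).index : ℚ) = N * ∏ p ∈ N.primeFactors, (1 + (p : ℚ)⁻¹) := by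
  have hfact : (Gamma0 N).index =
      N.factorization.prod fun p k => p ^ (k - 1) * (p + 1) := by
    rw [Nat.multiplicative_factorization (fun n => (Gamma0 n).index)
      (fun x y h => gamma0_index_mult h) gamma0_index_one hN.ne']
    refine Finsupp.prod_congr fun p hp => ?_
    have hp' : p.Prime := Nat.prime_of_mem_primeFactors hp
    have hk : N.factorization p ≠ 0 :=
      Finsupp.mem_support_iff.mp (by rw [Nat.support_factorization]; exact hp)
    exact gamma0_index_pp hp' hk
  rw [hfact]
  rw [Finsupp.prod]
  rw [Nat.support_factorization]
  push_cast
  have hNprod : (N : ℚ) = ∏ p ∈ N.primeFactors, (p : ℚ) ^ (N.factorization p) := by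
    conv_lhs => rw [← Nat.factorization_prod_pow_eq_self hN.ne']
    rw [Finsupp.prod, Nat.support_factorization]
    push_cast
    rfl
  rw [hNprod, ← Finset.prod_mul_distrib]
  refine Finset.prod_congr rfl fun p hp => ?_
  have hp' : p.Prime := Nat.prime_of_mem_primeFactors hp
  have hk : N.factorization p ≠ 0 :=
    Finsupp.mem_support_iff.mp (by rw [Nat.support_factorization]; exact hp)
  have hp0 : (p : ℚ) ≠ 0 := Nat.cast_ne_zero.mpr hp'.ne_zero
  have hpk : (p : ℚ) ^ (N.factorization p) = (p : ℚ) ^ (N.factorization p - 1) * p := by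
    rw [← pow_succ, Nat.sub_add_cancel (Nat.one_le_iff_ne_zero.mpr hk)]
  rw [hpk]
  field_simp
end

section
/- The principal congruence subgroup Γ(2) of SL(2,ℤ) is generated by the three matrices −I, T² = (1 2; 0 1), and ST²S = (−1 0; 2 −1). -/
open Matrix CongruenceSubgroup
open scoped MatrixGroups

/-- The matrix `T² = (1 2; 0 1)` as an element of `SL(2, ℤ)`. -/
def Tsq : SL(2, ℤ) := ⟨!![1, 2; 0, 1], by norm_num [Matrix.det_fin_two_of]⟩

/-- The matrix `S T² S = (−1 0; 2 −1)` as an element of `SL(2, ℤ)`,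
where `S = (0 −1; 1 0)` and `T = (1 1; 0 1)`. -/
def STsqS : SL(2, ℤ) := ⟨!![-1, 0; 2, -1], by norm_num [Matrix.det_fin_two_of]⟩

/-- `(1 2n; 0 1)` -/
def Um (n : ℤ) : SL(2, ℤ) := ⟨!![1, 2*n; 0, 1], by norm_num [Matrix.det_fin_two_of]⟩

/-- `(1 0; 2n 1)` -/
def Lm (n : ℤ) : SL(2, ℤ) := ⟨!![1, 0; 2*n, 1], by norm_num [Matrix.det_fin_two_of]⟩

local notation "G" => Subgroup.closure {(-1 : SL(2, ℤ)), Tsq, STsqS}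

lemma SL2_ext {A B : SL(2, ℤ)} (h : (A : Matrix (Fin 2) (Fin 2) ℤ) = B) : A = B :=
  Subtype.ext h

lemma Um_mem (n : ℤ) : Um n ∈ G := by
  have hT : Tsq ∈ G := Subgroup.subset_closure (by simp)
  induction n using Int.induction_on with
  | zero =>
    have : Um 0 = 1 := SL2_ext (by simp [Um, Matrix.one_fin_two])
    rw [this]; exact one_mem _
  | succ n ih =>
    have : Um (n + 1) = Um n * Tsq := SL2_ext (by
      rw [Matrix.SpecialLinearGroup.coe_mul]
      ext i j; fin_cases i <;> fin_cases j <;>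
        simp [Um, Tsq, Matrix.mul_fin_two] <;> ring)
    rw [this]; exact mul_mem ih hT
  | pred n ih =>
    have : Um (-n - 1) = Um (-n) * Tsq⁻¹ := by
      have h : Um (-n - 1) * Tsq = Um (-n) := SL2_ext (by
        rw [Matrix.SpecialLinearGroup.coe_mul]
        ext i j; fin_cases i <;> fin_cases j <;>
          simp [Um, Tsq, Matrix.mul_fin_two] <;> ring)
      rw [← h, mul_assoc, mul_inv_cancel, mul_one]
    rw [this]; exact mul_mem ih (inv_mem hT)

lemma Lm_neg_one_mem : Lm (-1) ∈ G := by
  have h : (-1 : SL(2, ℤ)) * STsqS = Lm (-1) := by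
    refine SL2_ext ?_
    show (-(1 : Matrix (Fin 2) (Fin 2) ℤ)) * !![-1, 0; 2, -1] = !![1, 0; 2*(-1), 1]
    rw [neg_mul, one_mul]
    ext i j; fin_cases i <;> fin_cases j <;> simp
  rw [← h]
  exact mul_mem (Subgroup.subset_closure (by simp))
    (Subgroup.subset_closure (by simp))

lemma Lm1_mem : Lm 1 ∈ G := by
  have h : Lm (-1) * Lm 1 = 1 := by
    refine SL2_ext ?_
    show (!![1, 0; 2*(-1), 1] : Matrix (Fin 2) (Fin 2) ℤ) * !![1, 0; 2*1, 1] =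
      (1 : Matrix (Fin 2) (Fin 2) ℤ)
    rw [Matrix.one_fin_two, Matrix.mul_fin_two]
    norm_num
  have : Lm 1 = (Lm (-1))⁻¹ := (inv_eq_of_mul_eq_one_right h).symm
  rw [this]
  exact inv_mem Lm_neg_one_mem

lemma Lm_mem (n : ℤ) : Lm n ∈ G := by
  induction n using Int.induction_on with
  | zero =>
    have : Lm 0 = 1 := SL2_ext (by simp [Lm, Matrix.one_fin_two])
    rw [this]; exact one_mem _
  | succ n ih =>
    have : Lm (n + 1) = Lm n * Lm 1 := SL2_ext (by
      rw [Matrix.SpecialLinearGroup.coe_mul]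
      ext i j; fin_cases i <;> fin_cases j <;>
        simp [Lm, Matrix.mul_fin_two] <;> ring)
    rw [this]; exact mul_mem ih Lm1_mem
  | pred n ih =>
    have : Lm (-n - 1) = Lm (-n) * Lm (-1) := SL2_ext (by
      rw [Matrix.SpecialLinearGroup.coe_mul]
      ext i j; fin_cases i <;> fin_cases j <;>
        simp [Lm, Matrix.mul_fin_two] <;> ring)
    rw [this]; exact mul_mem ih Lm_neg_one_mem

lemma two_n_cast (n : ℤ) : ((2 * n : ℤ) : ZMod 2) = 0 :=
  (ZMod.intCast_zmod_eq_zero_iff_dvd _ 2).mpr (by exact_mod_cast dvd_mul_right 2 n)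

lemma Um_gamma (n : ℤ) : Um n ∈ Gamma 2 := by
  rw [Gamma_mem]
  have e00 : (Um n : Matrix (Fin 2) (Fin 2) ℤ) 0 0 = 1 := by simp [Um]
  have e01 : (Um n : Matrix (Fin 2) (Fin 2) ℤ) 0 1 = 2 * n := by simp [Um]
  have e10 : (Um n : Matrix (Fin 2) (Fin 2) ℤ) 1 0 = 0 := by simp [Um]
  have e11 : (Um n : Matrix (Fin 2) (Fin 2) ℤ) 1 1 = 1 := by simp [Um]
  rw [e00, e01, e10, e11]
  exact ⟨by norm_num, two_n_cast n, by norm_num, by norm_num⟩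

lemma Lm_gamma (n : ℤ) : Lm n ∈ Gamma 2 := by
  rw [Gamma_mem]
  have e00 : (Lm n : Matrix (Fin 2) (Fin 2) ℤ) 0 0 = 1 := by simp [Lm]
  have e01 : (Lm n : Matrix (Fin 2) (Fin 2) ℤ) 0 1 = 0 := by simp [Lm]
  have e10 : (Lm n : Matrix (Fin 2) (Fin 2) ℤ) 1 0 = 2 * n := by simp [Lm]
  have e11 : (Lm n : Matrix (Fin 2) (Fin 2) ℤ) 1 1 = 1 := by simp [Lm]
  rw [e00, e01, e10, e11]
  exact ⟨by norm_num, by norm_num, two_n_cast n, by norm_num⟩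

lemma two_dvd_of_zmod {x : ℤ} (h : ((x : ZMod 2)) = 0) : (2 : ℤ) ∣ x := by
  have := (ZMod.intCast_zmod_eq_zero_iff_dvd x 2).mp h
  exact_mod_cast this

lemma key : ∀ (n : ℕ) (A : SL(2, ℤ)), A ∈ Gamma 2 →
    ((A : Matrix (Fin 2) (Fin 2) ℤ) 1 0).natAbs = n → A ∈ G := by
  intro n
  induction n using Nat.strong_induction_on with
  | _ n ih =>
  intro A hA hn
  obtain ⟨ha, hb, hc, hd⟩ := Gamma_mem.mp hA
  set a : ℤ := (A : Matrix (Fin 2) (Fin 2) ℤ) 0 0 with ha_def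
  set b : ℤ := (A : Matrix (Fin 2) (Fin 2) ℤ) 0 1 with hb_def
  set c : ℤ := (A : Matrix (Fin 2) (Fin 2) ℤ) 1 0 with hc_def
  set d : ℤ := (A : Matrix (Fin 2) (Fin 2) ℤ) 1 1 with hd_def
  have hAeq : (A : Matrix (Fin 2) (Fin 2) ℤ) = !![a, b; c, d] :=
    Matrix.eta_fin_two _
  have hdet : a * d - b * c = 1 := by
    have h2 := A.2
    rw [Matrix.det_fin_two] at h2
    exact h2
  have ha2 : (2 : ℤ) ∣ a - 1 := two_dvd_of_zmod (by push_cast; rw [ha]; ring)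
  have hb2 : (2 : ℤ) ∣ b := two_dvd_of_zmod (by push_cast; rw [hb])
  have hc2 : (2 : ℤ) ∣ c := two_dvd_of_zmod (by push_cast; rw [hc])
  by_cases hc0 : c = 0
  · -- diagonal case
    rw [hc0] at hdet
    obtain ⟨k, hk⟩ := hb2
    rcases Int.mul_eq_one_iff_eq_one_or_neg_one.mp
      (show a * d = 1 by linear_combination hdet) with ⟨ha1, hd1⟩ | ⟨ha1, hd1⟩
    · have : A = Um k := SL2_ext (by
        rw [hAeq]; simp [Um, ha1, hd1, hc0, hk])
      rw [this]; exact Um_mem k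
    · have : A = (-1 : SL(2, ℤ)) * Um (-k) := SL2_ext (by
        rw [Matrix.SpecialLinearGroup.coe_mul, hAeq,
          Matrix.SpecialLinearGroup.coe_neg, Matrix.SpecialLinearGroup.coe_one]
        ext i j; fin_cases i <;> fin_cases j <;>
          simp [Um, Matrix.mul_fin_two, ha1, hd1, hc0, hk] <;> ring)
      rw [this]
      exact mul_mem (Subgroup.subset_closure (by simp)) (Um_mem (-k))
  · -- reduction case: first reduce a modulo 2c
    set r : ℤ := a.bmod (2 * c.natAbs) with hr_def
    have hm1 : 0 < 2 * c.natAbs := by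
      have : c.natAbs ≠ 0 := fun h => hc0 (Int.natAbs_eq_zero.mp h)
      omega
    have hr_lt := Int.bmod_lt (x := a) hm1
    have hr_ge := Int.le_bmod (x := a) hm1
    rw [← hr_def] at hr_lt hr_ge
    have hdvd1 : ((2 * c.natAbs : ℕ) : ℤ) ∣ a - r := by
      have hmod : r % ((2 * c.natAbs : ℕ) : ℤ) = a % ((2 * c.natAbs : ℕ) : ℤ) :=
        Int.bmod_emod
      exact Int.ModEq.dvd (hmod : Int.ModEq _ r a)
    have hr2 : (2 : ℤ) ∣ a - r := dvd_trans ⟨c.natAbs, by push_cast; ring⟩ hdvd1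
    have hrabs : r.natAbs < c.natAbs := by omega
    have hr0 : r ≠ 0 := by
      intro h
      rw [h] at hr2
      omega
    -- q with a + 2*c*q = r
    obtain ⟨t, ht⟩ := hdvd1
    push_cast [Int.natCast_natAbs] at ht
    have hq : ∃ q : ℤ, a + 2 * c * q = r := by
      rcases abs_choice c with h | h <;> rw [h] at ht
      · exact ⟨-t, by linear_combination ht⟩
      · exact ⟨t, by linear_combination ht⟩
    obtain ⟨q, hq⟩ := hq
    -- second: reduce c modulo 2*r
    set c' : ℤ := c.bmod (2 * r.natAbs) with hc'_def
    have hm2 : 0 < 2 * r.natAbs := by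
      have : r.natAbs ≠ 0 := fun h => hr0 (Int.natAbs_eq_zero.mp h)
      omega
    have hc'_lt := Int.bmod_lt (x := c) hm2
    have hc'_ge := Int.le_bmod (x := c) hm2
    rw [← hc'_def] at hc'_lt hc'_ge
    have hc'abs : c'.natAbs ≤ r.natAbs := by omega
    have hdvd2 : ((2 * r.natAbs : ℕ) : ℤ) ∣ c - c' := by
      have hmod : c' % ((2 * r.natAbs : ℕ) : ℤ) = c % ((2 * r.natAbs : ℕ) : ℤ) :=
        Int.bmod_emod
      exact Int.ModEq.dvd (hmod : Int.ModEq _ c' c)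
    obtain ⟨s, hs⟩ := hdvd2
    push_cast [Int.natCast_natAbs] at hs
    have hp : ∃ p : ℤ, c + 2 * r * p = c' := by
      rcases abs_choice r with h | h <;> rw [h] at hs
      · exact ⟨-s, by linear_combination hs⟩
      · exact ⟨s, by linear_combination hs⟩
    obtain ⟨p, hp⟩ := hp
    -- the reduced matrix
    set B : SL(2, ℤ) := Lm p * (Um q * A) with hB_def
    have hBmat : (B : Matrix (Fin 2) (Fin 2) ℤ) =
        !![r, b + 2*q*d; c', 2*p*(b + 2*q*d) + d] := by
      rw [hB_def, Matrix.SpecialLinearGroup.coe_mul,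
        Matrix.SpecialLinearGroup.coe_mul, hAeq]
      show (!![1, 0; 2*p, 1] : Matrix (Fin 2) (Fin 2) ℤ) *
        (!![1, 2*q; 0, 1] * !![a, b; c, d]) = _
      rw [Matrix.mul_fin_two, Matrix.mul_fin_two]
      ext i j; fin_cases i <;> fin_cases j <;> simp
      · linear_combination hq
      · linear_combination 2 * p * hq + hp
    have hB10 : ((B : Matrix (Fin 2) (Fin 2) ℤ) 1 0).natAbs = c'.natAbs := by
      rw [hBmat]; simp
    have hBGamma : B ∈ Gamma 2 := mul_mem (Lm_gamma p) (mul_mem (Um_gamma q) hA)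
    have hBG : B ∈ G := ih c'.natAbs (by omega) B hBGamma hB10
    have hAeq2 : A = (Um q)⁻¹ * ((Lm p)⁻¹ * B) := by
      rw [hB_def]; group
    rw [hAeq2]
    exact mul_mem (inv_mem (Um_mem q)) (mul_mem (inv_mem (Lm_mem p)) hBG)

/-- **Generators of `Γ(2)`.**
The principal congruence subgroup `Γ(2)` of `SL(2, ℤ)` is generated by the three matrices
`−I`, `T² = (1 2; 0 1)` and `S T² S = (−1 0; 2 −1)`. -/
theorem Gamma_two_generated :
    Gamma 2 = Subgroup.closure {(-1 : SL(2, ℤ)), Tsq, STsqS} := by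
  apply le_antisymm
  · intro A hA
    exact key _ A hA rfl
  · rw [Subgroup.closure_le]
    rintro x (rfl | rfl | rfl)
    · rw [SetLike.mem_coe, Gamma_mem]
      refine ⟨?_, ?_, ?_, ?_⟩ <;>
        simp [Matrix.SpecialLinearGroup.coe_neg] <;> decide
    · rw [SetLike.mem_coe, Gamma_mem]
      refine ⟨?_, ?_, ?_, ?_⟩ <;> simp [Tsq] <;> decide
    · rw [SetLike.mem_coe, Gamma_mem]
      refine ⟨?_, ?_, ?_, ?_⟩ <;> simp [STsqS] <;> decide
end
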